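/- arXiv:math/9807026 — 3 statements merged into one kernel-verified Lean document; each statement's English description precedes it below -/
import Mathlib

section
/- Let A, B be real n×n matrices satisfying: (c1) A is entrywise nonnegative, (c2) B_{ij} ≤ A_{ij} for all i ≠ j, and (c3) there exists an entrywise positive vector u with (B−A)u entrywise positive. Set μ = ρ((B−A)⁻¹A) and ρ(A,B) = μ/(1+μ). Then ρ(A,B) ∈ [0,1), ρ(A,B) is an eigenvalue of the pencil (A,B), and every real eigenvalue λ of (A,B) with λ ∈ [0,1) satisfies λ ≤ ρ(A,B). -/
open Matrix

/-- Spectral radius of a real matrix: supremum of the absolute values of its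
complex eigenvalues. -/
noncomputable def specRad {m : Type*} [Fintype m] [DecidableEq m] (M : Matrix m m ℝ) : ℝ :=
  sSup ((fun z : ℂ => ‖z‖) '' spectrum ℂ (M.map (algebraMap ℝ ℂ)))

/-- Principal submatrix of `A` with rows and columns indexed by `J`. -/
def subm {n : ℕ} (A : Matrix (Fin n) (Fin n) ℝ) (J : Finset (Fin n)) :
    Matrix {i // i ∈ J} {i // i ∈ J} ℝ :=
  A.submatrix Subtype.val Subtype.val

/-- `X` is an M-matrix: `X = q•I − P` with `P ≥ 0` and `q ≥ ρ(P)`. -/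
def IsMMatrix {m : Type*} [Fintype m] [DecidableEq m] (X : Matrix m m ℝ) : Prop :=
  ∃ q : ℝ, ∃ P : Matrix m m ℝ, (∀ i j, 0 ≤ P i j) ∧ X = q • 1 - P ∧ specRad P ≤ q

/-- `X` is a nonsingular M-matrix: `X = q•I − P` with `P ≥ 0` and `q > ρ(P)`. -/
def IsNonsingMMatrix {m : Type*} [Fintype m] [DecidableEq m] (X : Matrix m m ℝ) : Prop :=
  ∃ q : ℝ, ∃ P : Matrix m m ℝ, (∀ i j, 0 ≤ P i j) ∧ X = q • 1 - P ∧ specRad P < q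

/-!
The Collatz–Wielandt number `r = max {t | t • x ≤ M x for some x in the standard simplex}` of a
nonnegative matrix `M` is the Perron root: for a positive matrix a maximizing `x` must be an
eigenvector (otherwise applying `M` once more improves `t`), the nonnegative case follows by
perturbing to `M + εJ` and letting `ε → 0` inside a compact set, and the triangle inequality puts
`‖z‖` into the Collatz–Wielandt set for every complex eigenvalue `z`. So `ρ(M)` is an eigenvalue
of `M` with a real eigenvector.

Since `B - A` has nonpositive off-diagonal entries and maps a positive vector to a positive one,
it is inverse-nonnegative, so `M = (B - A)⁻¹ A ≥ 0`. Finally `A x = λ B x` iff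
`M x = λ / (1 - λ) • x`, and `t ↦ t / (1 + t)` is increasing.
-/

open Set

theorem ne_zero_of_mem_stdSimplex {𝕜 ι : Type*} [Semiring 𝕜] [PartialOrder 𝕜] [Nontrivial 𝕜]
    [Fintype ι] {x : ι → 𝕜} (hx : x ∈ stdSimplex 𝕜 ι) : x ≠ 0 :=
  fun h => by simpa [h] using hx.2

namespace Matrix

section Spectrum

variable {ι : Type*} [Fintype ι] [DecidableEq ι]

theorem mem_spectrum_iff_exists_mulVec_eq_smul {K : Type*} [Field K] {M : Matrix ι ι K} {z : K} :
    z ∈ spectrum K M ↔ ∃ v ≠ 0, M *ᵥ v = z • v := by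
  rw [← spectrum_toLin', ← Module.End.hasEigenvalue_iff_mem_spectrum]
  constructor
  · intro h
    obtain ⟨v, hv, hv0⟩ := h.exists_hasEigenvector
    exact ⟨v, hv0, by simpa using Module.End.mem_eigenspace_iff.1 hv⟩
  · rintro ⟨v, hv0, hv⟩
    exact Module.End.hasEigenvalue_of_hasEigenvector
      ⟨Module.End.mem_eigenspace_iff.2 (by simpa using hv), hv0⟩

theorem ofReal_mem_spectrum_map {M : Matrix ι ι ℝ} {t : ℝ} {x : ι → ℝ} (hx : x ≠ 0)
    (h : M *ᵥ x = t • x) : (t : ℂ) ∈ spectrum ℂ (M.map (algebraMap ℝ ℂ)) := by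
  refine mem_spectrum_iff_exists_mulVec_eq_smul.2 ⟨algebraMap ℝ ℂ ∘ x, ?_, ?_⟩
  · exact fun h0 => hx (funext fun i => by simpa using congrFun h0 i)
  · funext i
    rw [← RingHom.map_mulVec, h]
    simp

theorem specRad_nonneg (M : Matrix ι ι ℝ) : 0 ≤ specRad M :=
  Real.sSup_nonneg fun _ ⟨_, _, h⟩ => h ▸ norm_nonneg _

theorem le_specRad_of_mulVec_eq_smul {M : Matrix ι ι ℝ} {t : ℝ} {x : ι → ℝ} (hx : x ≠ 0)
    (h : M *ᵥ x = t • x) : t ≤ specRad M := by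
  have hbdd : BddAbove ((fun z : ℂ => ‖z‖) '' spectrum ℂ (M.map (algebraMap ℝ ℂ))) :=
    ((finite_spectrum _).image _).bddAbove
  calc t ≤ ‖(t : ℂ)‖ := by simpa using le_abs_self t
    _ ≤ specRad M := le_csSup hbdd ⟨_, ofReal_mem_spectrum_map hx h, rfl⟩

end Spectrum

section CollatzWielandt

variable {ι : Type*} [Fintype ι]

def collatzWielandtSet (M : Matrix ι ι ℝ) : Set ℝ :=
  {t | ∃ x ∈ stdSimplex ℝ ι, ∀ i, t * x i ≤ (M *ᵥ x) i}

variable {M N : Matrix ι ι ℝ} {t : ℝ} {x : ι → ℝ}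

theorem mem_collatzWielandtSet_of_nonneg (hx0 : 0 ≤ x) (hx : x ≠ 0)
    (h : ∀ i, t * x i ≤ (M *ᵥ x) i) : t ∈ collatzWielandtSet M := by
  have hs : 0 < ∑ i, x i := Fintype.sum_pos (lt_of_le_of_ne hx0 hx.symm)
  refine ⟨(∑ i, x i)⁻¹ • x, ⟨fun i => ?_, ?_⟩, fun i => ?_⟩
  · exact mul_nonneg (inv_nonneg.2 hs.le) (hx0 i)
  · simp [← Finset.mul_sum, hs.ne']
  · rw [mulVec_smul, Pi.smul_apply, Pi.smul_apply, smul_eq_mul, smul_eq_mul, mul_left_comm]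
    exact mul_le_mul_of_nonneg_left (h i) (inv_nonneg.2 hs.le)

theorem mulVec_pos_of_pos {P : Matrix ι ι ℝ} (hP : ∀ i j, 0 < P i j) (hx0 : 0 ≤ x) (hx : x ≠ 0) (i : ι) :
    0 < (P *ᵥ x) i := by
  obtain ⟨j, hj⟩ := Function.ne_iff.1 hx
  exact Finset.sum_pos' (fun k _ => mul_nonneg (hP i k).le (hx0 k))
    ⟨j, Finset.mem_univ j, mul_pos (hP i j) (lt_of_le_of_ne (hx0 j) (Ne.symm hj))⟩

theorem zero_mem_collatzWielandtSet [Nonempty ι] (hM : ∀ i j, 0 ≤ M i j) :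
    0 ∈ collatzWielandtSet M := by
  classical
  obtain ⟨k⟩ := ‹Nonempty ι›
  refine ⟨Pi.single k 1, single_mem_stdSimplex ℝ k, fun i => ?_⟩
  simpa [mulVec_single] using hM i k

theorem le_sum_of_mem_collatzWielandtSet (hM : ∀ i j, 0 ≤ M i j)
    (ht : t ∈ collatzWielandtSet M) : t ≤ ∑ i, ∑ j, M i j := by
  obtain ⟨x, hx, hle⟩ := ht
  calc t = ∑ i, t * x i := by rw [← Finset.mul_sum, hx.2, mul_one]
    _ ≤ ∑ i, (M *ᵥ x) i := Finset.sum_le_sum fun i _ => hle i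
    _ ≤ ∑ i, ∑ j, M i j := Finset.sum_le_sum fun i _ => Finset.sum_le_sum fun j _ =>
        mul_le_of_le_one_right (hM i j) (mem_Icc_of_mem_stdSimplex hx j).2

theorem collatzWielandtSet_mono (h : ∀ i j, M i j ≤ N i j) :
    collatzWielandtSet M ⊆ collatzWielandtSet N := by
  rintro t ⟨x, hx, hle⟩
  exact ⟨x, hx, fun i => (hle i).trans <|
    Finset.sum_le_sum fun j _ => mul_le_mul_of_nonneg_right (h i j) (hx.1 j)⟩

theorem norm_mem_collatzWielandtSet_of_mem_spectrum [DecidableEq ι] (hM : ∀ i j, 0 ≤ M i j)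
    {z : ℂ} (hz : z ∈ spectrum ℂ (M.map (algebraMap ℝ ℂ))) : ‖z‖ ∈ collatzWielandtSet M := by
  obtain ⟨v, hv0, hv⟩ := mem_spectrum_iff_exists_mulVec_eq_smul.1 hz
  refine mem_collatzWielandtSet_of_nonneg (x := fun i => ‖v i‖) (fun i => norm_nonneg _)
    (fun h => hv0 (funext fun i => norm_eq_zero.1 (congrFun h i))) fun i => ?_
  calc ‖z‖ * ‖v i‖ = ‖∑ j, (M i j : ℂ) * v j‖ := by
        rw [← norm_mul, ← smul_eq_mul, ← Pi.smul_apply, ← hv]; rfl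
    _ ≤ ∑ j, ‖(M i j : ℂ) * v j‖ := norm_sum_le _ _
    _ = (M *ᵥ fun i => ‖v i‖) i := by
        simp only [norm_mul, Complex.norm_real, Real.norm_of_nonneg (hM _ _)]; rfl

theorem exists_isGreatest_collatzWielandtSet [Nonempty ι] (hM : ∀ i j, 0 ≤ M i j) :
    ∃ r, IsGreatest (collatzWielandtSet M) r := by
  set K : Set (ℝ × (ι → ℝ)) := (Icc 0 (∑ i, ∑ j, M i j) ×ˢ stdSimplex ℝ ι) ∩
    ⋂ i, {p | p.1 * p.2 i ≤ (M *ᵥ p.2) i}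
  have hK : IsCompact K := (isCompact_Icc.prod (isCompact_stdSimplex ℝ ι)).inter_right <|
    isClosed_iInter fun i => isClosed_le (by fun_prop) (by fun_prop)
  obtain ⟨x₀, hx₀, hle₀⟩ := zero_mem_collatzWielandtSet hM
  have h₀ : (0, x₀) ∈ K :=
    ⟨⟨⟨le_rfl, le_sum_of_mem_collatzWielandtSet hM ⟨x₀, hx₀, hle₀⟩⟩, hx₀⟩, mem_iInter.2 hle₀⟩
  obtain ⟨⟨r, x⟩, ⟨⟨hr, hx⟩, hrx⟩, hmax⟩ := hK.exists_isMaxOn ⟨_, h₀⟩ continuous_fst.continuousOn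
  refine ⟨r, ⟨x, hx, mem_iInter.1 hrx⟩, fun t ⟨y, hy, hty⟩ => ?_⟩
  rcases lt_or_ge t 0 with ht | ht
  · exact ht.le.trans hr.1
  · exact hmax (a := (t, y)) ⟨⟨⟨ht, le_sum_of_mem_collatzWielandtSet hM ⟨y, hy, hty⟩⟩, hy⟩,
      mem_iInter.2 hty⟩

end CollatzWielandt

section Perron

variable {ι : Type*} [Fintype ι] [Nonempty ι] {M P : Matrix ι ι ℝ} {r : ℝ} {x : ι → ℝ}

theorem exists_pos_mul_le {a b : ι → ℝ} (ha : ∀ i, 0 < a i) (hb : ∀ i, 0 < b i) :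
    ∃ δ > 0, ∀ i, δ * a i ≤ b i := by
  obtain ⟨k, hk⟩ := Finite.exists_min fun i => b i / a i
  exact ⟨b k / a k, div_pos (hb k) (ha k), fun i => (le_div_iff₀ (ha i)).1 (hk i)⟩

theorem mulVec_eq_smul_of_isGreatest_of_pos (hP : ∀ i j, 0 < P i j)
    (hr : IsGreatest (collatzWielandtSet P) r) (hx : x ∈ stdSimplex ℝ ι)
    (hrx : ∀ i, r * x i ≤ (P *ᵥ x) i) : P *ᵥ x = r • x := by
  by_contra hne
  set d := P *ᵥ x - r • x
  have hd0 : 0 ≤ d := fun i => sub_nonneg.2 (hrx i)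
  have hPx := mulVec_pos_of_pos hP hx.1 (ne_zero_of_mem_stdSimplex hx)
  obtain ⟨δ, hδ, hδle⟩ :=
    exists_pos_mul_le hPx (mulVec_pos_of_pos hP hd0 (sub_ne_zero.2 hne))
  obtain ⟨k⟩ := ‹Nonempty ι›
  have hmem : r + δ ∈ collatzWielandtSet P := by
    refine mem_collatzWielandtSet_of_nonneg (x := P *ᵥ x) (fun i => (hPx i).le)
      (fun h => (hPx k).ne' (congrFun h k)) fun i => ?_
    have hPd := congrFun (mulVec_sub P (P *ᵥ x) (r • x)) i
    simp only [mulVec_smul, Pi.sub_apply, Pi.smul_apply, smul_eq_mul] at hPd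
    linarith [hδle i]
  linarith [hr.2 hmem]

/-- The eigenvectors of the positive matrices `M + ε J` (`J` the all-ones matrix) lie in a compact
set; a limit point as `ε → 0` is an eigenvector of `M`. -/
theorem exists_mulVec_eq_smul_of_isGreatest (hM : ∀ i j, 0 ≤ M i j)
    (hr : IsGreatest (collatzWielandtSet M) r) : ∃ x ∈ stdSimplex ℝ ι, M *ᵥ x = r • x := by
  set J : Matrix ι ι ℝ := of fun _ _ => 1
  set K : Set (ℝ × ℝ × (ι → ℝ)) :=
    (Icc 0 1 ×ˢ Icc r (∑ i, ∑ j, (M i j + 1)) ×ˢ stdSimplex ℝ ι) ∩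
      {p | (M + p.1 • J) *ᵥ p.2.2 = p.2.1 • p.2.2}
  have hK : IsCompact K :=
    (isCompact_Icc.prod (isCompact_Icc.prod (isCompact_stdSimplex ℝ ι))).inter_right
      (isClosed_eq (by fun_prop) (by fun_prop))
  have hperturbed : Ioc 0 1 ⊆ Prod.fst '' K := by
    rintro ε ⟨hε, hε1⟩
    have hpos : ∀ i j, 0 < (M + ε • J) i j := fun i j => by
      simp only [J, add_apply, smul_apply, of_apply, smul_eq_mul, mul_one]
      linarith [hM i j]
    obtain ⟨s, hs⟩ := exists_isGreatest_collatzWielandtSet fun i j => (hpos i j).le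
    obtain ⟨y, hy, hsy⟩ := hs.1
    refine ⟨(ε, s, y), ⟨⟨⟨hε.le, hε1⟩, ⟨?_, ?_⟩, hy⟩,
      mulVec_eq_smul_of_isGreatest_of_pos hpos hs hy hsy⟩, rfl⟩
    · exact hs.2 (collatzWielandtSet_mono (fun i j => by simp [J, hε.le]) hr.1)
    · refine (le_sum_of_mem_collatzWielandtSet (fun i j => (hpos i j).le) hs.1).trans ?_
      exact Finset.sum_le_sum fun i _ => Finset.sum_le_sum fun j _ => by simp [J, hε1]
  have h0 : (0 : ℝ) ∈ Prod.fst '' K :=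
    (hK.image continuous_fst).isClosed.closure_subset_iff.2 hperturbed
      (by rw [closure_Ioc zero_ne_one]; exact left_mem_Icc.2 zero_le_one)
  obtain ⟨⟨_, t, x⟩, ⟨⟨-, ⟨hrt, -⟩, hx⟩, htx⟩, rfl⟩ := h0
  have htx' : M *ᵥ x = t • x := by simpa using htx
  have htr : t ≤ r := hr.2 ⟨x, hx, fun i => (congrFun htx' i).ge⟩
  exact ⟨x, hx, le_antisymm htr hrt ▸ htx'⟩

theorem specRad_eq_of_isGreatest [DecidableEq ι] (hM : ∀ i j, 0 ≤ M i j)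
    (hr : IsGreatest (collatzWielandtSet M) r) : specRad M = r := by
  obtain ⟨x, hx, hrx⟩ := exists_mulVec_eq_smul_of_isGreatest hM hr
  have hr0 : 0 ≤ r := hr.2 (zero_mem_collatzWielandtSet hM)
  refine IsGreatest.csSup_eq ⟨⟨r, ofReal_mem_spectrum_map (ne_zero_of_mem_stdSimplex hx) hrx, ?_⟩, ?_⟩
  · simp [abs_of_nonneg hr0]
  · rintro _ ⟨z, hz, rfl⟩
    exact hr.2 (norm_mem_collatzWielandtSet_of_mem_spectrum hM hz)

theorem exists_mulVec_eq_specRad_smul [DecidableEq ι] (hM : ∀ i j, 0 ≤ M i j) :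
    ∃ x ≠ 0, M *ᵥ x = specRad M • x := by
  obtain ⟨r, hr⟩ := exists_isGreatest_collatzWielandtSet hM
  obtain ⟨x, hx, hrx⟩ := exists_mulVec_eq_smul_of_isGreatest hM hr
  exact ⟨x, ne_zero_of_mem_stdSimplex hx, by rwa [specRad_eq_of_isGreatest hM hr]⟩

end Perron

section ZMatrix

variable {ι : Type*} [Fintype ι] {C : Matrix ι ι ℝ} {u : ι → ℝ}

/-- Shift `x` by the multiple of `u` that makes it vanish at some index `k` while staying
nonnegative; there the nonpositive off-diagonal entries force `(C (x + s u))ₖ ≤ 0`. -/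
theorem nonneg_of_mulVec_nonneg (hC : ∀ i j, i ≠ j → C i j ≤ 0) (hu : ∀ i, 0 < u i)
    (hCu : ∀ i, 0 < (C *ᵥ u) i) {x : ι → ℝ} (hx : 0 ≤ C *ᵥ x) : 0 ≤ x := by
  by_contra hneg
  obtain ⟨i₁, hi₁⟩ : ∃ i, x i < 0 := by simpa [Pi.le_def] using hneg
  have : Nonempty ι := ⟨i₁⟩
  obtain ⟨k, hk⟩ := Finite.exists_min fun i => x i / u i
  set s := -(x k / u k)
  have hs : 0 < s := neg_pos.2 ((hk i₁).trans_lt (div_neg_of_neg_of_pos hi₁ (hu i₁)))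
  set y := x + s • u
  have hy0 : ∀ j, 0 ≤ y j := fun j => by
    have := (le_div_iff₀ (hu j)).1 (hk j)
    simp only [y, s, Pi.add_apply, Pi.smul_apply, smul_eq_mul]
    linarith
  have hyk : y k = 0 := by
    simp [y, s, div_mul_cancel₀ _ (hu k).ne']
  have hpos : 0 < (C *ᵥ y) k := by
    rw [mulVec_add, mulVec_smul, Pi.add_apply, Pi.smul_apply, smul_eq_mul]
    exact add_pos_of_nonneg_of_pos (hx k) (mul_pos hs (hCu k))
  have hnonpos : (C *ᵥ y) k ≤ 0 := Finset.sum_nonpos fun j _ => by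
    rcases eq_or_ne k j with rfl | hkj
    · rw [hyk, mul_zero]
    · exact mul_nonpos_of_nonpos_of_nonneg (hC k j hkj) (hy0 j)
  exact hpos.not_ge hnonpos

variable [DecidableEq ι]

theorem isUnit_det_of_offDiag_nonpos (hC : ∀ i j, i ≠ j → C i j ≤ 0) (hu : ∀ i, 0 < u i)
    (hCu : ∀ i, 0 < (C *ᵥ u) i) : IsUnit C.det := by
  refine isUnit_iff_ne_zero.2 fun h => ?_
  obtain ⟨v, hv0, hv⟩ := exists_mulVec_eq_zero_iff.2 h
  have hneg := nonneg_of_mulVec_nonneg hC hu hCu (x := -v) (by rw [mulVec_neg, hv, neg_zero])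
  exact hv0 (le_antisymm (neg_nonneg.1 hneg) (nonneg_of_mulVec_nonneg hC hu hCu hv.ge))

theorem inv_nonneg_of_offDiag_nonpos (hC : ∀ i j, i ≠ j → C i j ≤ 0) (hu : ∀ i, 0 < u i)
    (hCu : ∀ i, 0 < (C *ᵥ u) i) (i j : ι) : 0 ≤ C⁻¹ i j := by
  have h := nonneg_of_mulVec_nonneg hC hu hCu (x := C⁻¹ *ᵥ Pi.single j 1) <| by
    rw [mulVec_mulVec, mul_nonsing_inv _ (isUnit_det_of_offDiag_nonpos hC hu hCu), one_mulVec]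
    exact Pi.single_nonneg.2 zero_le_one
  simpa [mulVec_single] using h i

end ZMatrix

section Pencil

variable {ι : Type*} [Fintype ι] [DecidableEq ι] {A B : Matrix ι ι ℝ} {x : ι → ℝ}

theorem mulVec_eq_div_smul_mulVec_iff (hdet : IsUnit (B - A).det) {μ : ℝ} (hμ : 1 + μ ≠ 0) :
    A *ᵥ x = (μ / (1 + μ)) • B *ᵥ x ↔ ((B - A)⁻¹ * A) *ᵥ x = μ • x := by
  have hinv : ((B - A)⁻¹ * A) *ᵥ x = μ • x ↔ A *ᵥ x = μ • (B - A) *ᵥ x := by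
    rw [← mulVec_mulVec]
    constructor
    · intro h
      rw [← mulVec_smul, ← h, mulVec_mulVec, mul_nonsing_inv _ hdet, one_mulVec]
    · intro h
      rw [h, mulVec_smul, mulVec_mulVec, nonsing_inv_mul _ hdet, one_mulVec]
  rw [hinv, sub_mulVec, funext_iff, funext_iff]
  refine forall_congr' fun i => ?_
  simp only [Pi.smul_apply, Pi.sub_apply, smul_eq_mul]
  rw [div_mul_eq_mul_div, eq_div_iff hμ]
  constructor <;> intro h <;> linarith

theorem le_div_one_add_specRad_of_mulVec_eq_smul_mulVec (hdet : IsUnit (B - A).det) {lam : ℝ}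
    (hlam0 : 0 ≤ lam) (hlam1 : lam < 1) (hx0 : x ≠ 0) (hx : A *ᵥ x = lam • B *ᵥ x) :
    lam ≤ specRad ((B - A)⁻¹ * A) / (1 + specRad ((B - A)⁻¹ * A)) := by
  have h1lam : 1 - lam ≠ 0 := (sub_pos.2 hlam1).ne'
  set t := lam / (1 - lam)
  have h1t : 0 < 1 + t := by positivity
  have hlam : lam = t / (1 + t) := by
    simp only [t]
    field_simp
    ring
  rw [hlam] at hx ⊢
  have ht := le_specRad_of_mulVec_eq_smul hx0 ((mulVec_eq_div_smul_mulVec_iff hdet h1t.ne').1 hx)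
  rw [div_le_div_iff₀ h1t (by linarith [specRad_nonneg ((B - A)⁻¹ * A)])]
  nlinarith

end Pencil

end Matrix

/-- Under (c1)–(c3), `ρ(A,B) = μ/(1+μ)` with `μ = ρ((B−A)⁻¹A)` lies in `[0,1)`,
is an eigenvalue of the pencil `(A,B)`, and is the largest real eigenvalue of
`(A,B)` in `[0,1)`. -/
theorem stmt_3 {n : ℕ} (hn : 0 < n) (A B : Matrix (Fin n) (Fin n) ℝ)
    (hc1 : ∀ i j, 0 ≤ A i j)
    (hc2 : ∀ i j, i ≠ j → B i j ≤ A i j)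
    (hc3 : ∃ u : Fin n → ℝ, (∀ i, 0 < u i) ∧ ∀ i, 0 < (B - A).mulVec u i)
    (μ ρAB : ℝ) (hμ : μ = specRad ((B - A)⁻¹ * A)) (hρ : ρAB = μ / (1 + μ)) :
    (0 ≤ ρAB ∧ ρAB < 1) ∧
    (∃ x : Fin n → ℝ, x ≠ 0 ∧ A.mulVec x = ρAB • B.mulVec x) ∧
    (∀ lam : ℝ, 0 ≤ lam → lam < 1 →
      (∃ x : Fin n → ℝ, x ≠ 0 ∧ A.mulVec x = lam • B.mulVec x) →
      lam ≤ ρAB) := by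
  obtain ⟨u, hu, hCu⟩ := hc3
  have hoff : ∀ i j, i ≠ j → (B - A) i j ≤ 0 := fun i j hij => sub_nonpos.2 (hc2 i j hij)
  have hdet := isUnit_det_of_offDiag_nonpos hoff hu hCu
  have hM : ∀ i j, 0 ≤ ((B - A)⁻¹ * A) i j := fun i j => by
    rw [mul_apply]
    exact Finset.sum_nonneg fun k _ =>
      mul_nonneg (inv_nonneg_of_offDiag_nonpos hoff hu hCu i k) (hc1 k j)
  have : Nonempty (Fin n) := ⟨⟨0, hn⟩⟩
  obtain ⟨x, hx0, hx⟩ := exists_mulVec_eq_specRad_smul hM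
  subst hρ hμ
  have hμ0 := specRad_nonneg ((B - A)⁻¹ * A)
  have h1μ : 0 < 1 + specRad ((B - A)⁻¹ * A) := by linarith
  refine ⟨⟨div_nonneg hμ0 h1μ.le, (div_lt_one h1μ).2 (by linarith)⟩, ?_, ?_⟩
  · exact ⟨x, hx0, (mulVec_eq_div_smul_mulVec_iff hdet h1μ.ne').2 hx⟩
  · rintro lam hlam0 hlam1 ⟨y, hy0, hy⟩
    exact le_div_one_add_specRad_of_mulVec_eq_smul_mulVec hdet hlam0 hlam1 hy0 hy
end

section
/- Let A, B be real n×n matrices satisfying: (c1) A is entrywise nonnegative and (c2) B_{ij} ≤ A_{ij} for all i ≠ j. Then for every t with 0 < t < 1, the classes of the digraph G(tB − A) coincide with the classes of the digraph G(A) ∪ G(B); that is, the communication equivalence relations of the two digraphs are equal. -/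
/-!
Off the diagonal, `0 ≤ A_{ab}` and `B_{ab} ≤ A_{ab}` force `t B_{ab} < A_{ab}` as soon as
`A_{ab} ≠ 0` or `B_{ab} ≠ 0` (using `0 < t < 1`), so `tB − A` has an off-diagonal zero exactly
where both `A` and `B` do. The two digraphs thus differ only in self-loops, which do not affect
access.
-/

open Matrix


/-- Edge relation of the digraph `G(X)` of a matrix `X`: edge `(j,k)` iff
`X_{jk} ≠ 0`. -/
def edgeRel {n : ℕ} (X : Matrix (Fin n) (Fin n) ℝ) (j k : Fin n) : Prop :=
  X j k ≠ 0

/-- `j` has access to `k` in the digraph with edge relation `Γ`: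
`j = k` or there is a directed path from `j` to `k`. -/
def Access {n : ℕ} (Γ : Fin n → Fin n → Prop) (j k : Fin n) : Prop :=
  Relation.ReflTransGen Γ j k

/-- `j` and `k` communicate: each has access to the other. -/
def Communicate {n : ℕ} (Γ : Fin n → Fin n → Prop) (j k : Fin n) : Prop :=
  Access Γ j k ∧ Access Γ k j

/-- `C` is a class of the digraph with edge relation `Γ`: an equivalence class
of the communication relation. -/
def IsClass {n : ℕ} (Γ : Fin n → Fin n → Prop) (C : Finset (Fin n)) : Prop :=
  ∃ v : Fin n, ∀ w, w ∈ C ↔ Communicate Γ v w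

section Digraph

variable {n : ℕ} {Γ Γ' : Fin n → Fin n → Prop}

lemma Access.mono_of_ne (h : ∀ a b, a ≠ b → Γ a b → Γ' a b) {j k : Fin n}
    (hjk : Access Γ j k) : Access Γ' j k := by
  induction hjk with
  | refl => exact .refl
  | @tail b c _ hbc ih =>
    by_cases hb : b = c
    · exact hb ▸ ih
    · exact ih.tail (h b c hb hbc)

lemma communicate_iff_of_ne (h : ∀ a b, a ≠ b → (Γ a b ↔ Γ' a b)) (j k : Fin n) :
    Communicate Γ j k ↔ Communicate Γ' j k :=
  have forth := fun a b hab => (h a b hab).mp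
  have back := fun a b hab => (h a b hab).mpr
  ⟨fun ⟨hjk, hkj⟩ => ⟨hjk.mono_of_ne forth, hkj.mono_of_ne forth⟩,
    fun ⟨hjk, hkj⟩ => ⟨hjk.mono_of_ne back, hkj.mono_of_ne back⟩⟩

end Digraph

lemma mul_sub_eq_zero_iff_of_le {α : Type*} [Field α] [LinearOrder α] [IsStrictOrderedRing α]
    {a b t : α} (ha : 0 ≤ a) (hba : b ≤ a) (ht₀ : 0 < t) (ht₁ : t < 1) :
    t * b - a = 0 ↔ a = 0 ∧ b = 0 := by
  refine ⟨fun h => ?_, fun ⟨ha₀, hb₀⟩ => by rw [ha₀, hb₀]; ring⟩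
  have hb : b ≤ 0 := by nlinarith
  have ha₀ : a = 0 := by nlinarith
  exact ⟨ha₀, by nlinarith⟩

lemma edgeRel_smul_sub_iff {n : ℕ} {A B : Matrix (Fin n) (Fin n) ℝ} {a b : Fin n}
    (hA : 0 ≤ A a b) (hBA : B a b ≤ A a b) {t : ℝ} (ht₀ : 0 < t) (ht₁ : t < 1) :
    edgeRel (t • B - A) a b ↔ edgeRel A a b ∨ edgeRel B a b := by
  simp only [edgeRel, Matrix.sub_apply, Matrix.smul_apply, smul_eq_mul, ne_eq,
    mul_sub_eq_zero_iff_of_le hA hBA ht₀ ht₁, not_and_or]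

/-- Under (c1) and (c2), for `0 < t < 1` the classes of `G(tB − A)` coincide
with those of `G(A) ∪ G(B)`: the communication relations are equal. -/
theorem stmt_11 {n : ℕ} (A B : Matrix (Fin n) (Fin n) ℝ)
    (hc1 : ∀ i j, 0 ≤ A i j)
    (hc2 : ∀ i j, i ≠ j → B i j ≤ A i j) :
    ∀ t : ℝ, 0 < t → t < 1 → ∀ j k : Fin n,
      Communicate (edgeRel (t • B - A)) j k ↔
      Communicate (fun a b => edgeRel A a b ∨ edgeRel B a b) j k :=
  fun _ ht₀ ht₁ => communicate_iff_of_ne fun a b hab =>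
    edgeRel_smul_sub_iff (hc1 a b) (hc2 a b hab) ht₀ ht₁
end

section
/- Let A, B be real n×n matrices satisfying: (c1) A is entrywise nonnegative, (c2) B_{ij} ≤ A_{ij} for all i ≠ j, and (c3) there exists an entrywise positive vector u with (B−A)u entrywise positive. Set μ = ρ((B−A)⁻¹A), ρ(A,B) = μ/(1+μ), and let Γ = G(A) ∪ G(B) if ρ(A,B) ≠ 0 and Γ = G(A) if ρ(A,B) = 0. Let J_1,…,J_p be the classes J of Γ such that (i) (ρ(A,B)B − A)_J is singular and (ii) every class K ≠ J of Γ with access to J in the reduced graph of Γ has (ρ(A,B)B − A)_K nonsingular, and for each i let x^i be an entrywise nonnegative vector in the nullspace of ρ(A,B)B − A with x^i_j > 0 exactly when j has access in Γ to some vertex of J_i. Then every entrywise nonnegative vector in the nullspace of ρ(A,B)B − A is a linear combination of x^1,…,x^p with nonnegative coefficients. -/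
open Matrix

/-!
Write `M = ρ(A,B)B − A`. Since `0 ≤ ρ(A,B) < 1`, `M` is a Z-matrix whose off-diagonal nonzero
pattern is exactly the edge set of `Γ`, so the support of a nonnegative null vector `y` of `M` is
closed under "has access to". Inside this support there is a singular class (take a class that is
final among the vertices of the support: `y` restricted to it is a null vector of its principal
submatrix), and among the singular classes in the support one that no other singular class
accesses is a distinguished one, `J i` say. Then `supp x i ⊆ supp y`, and subtracting the largest
multiple of `x i` that keeps `y` nonnegative shrinks the support, so induction on the size of the
support writes `y` as a nonnegative combination of the `x i`.
-/

open Function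

theorem mul_sub_nonpos {a b r : ℝ} (ha : 0 ≤ a) (hba : b ≤ a) (hr0 : 0 ≤ r) (hr1 : r ≤ 1) :
    r * b - a ≤ 0 := by
  nlinarith

theorem mul_sub_eq_zero_iff {a b r : ℝ} (ha : 0 ≤ a) (hba : b ≤ a) (hr0 : 0 ≤ r) (hr1 : r < 1) :
    r * b - a = 0 ↔ a = 0 ∧ (r = 0 ∨ b = 0) := by
  refine ⟨fun h => ?_, fun ⟨ha0, hrb⟩ => by rcases hrb with rfl | rfl <;> simp [ha0]⟩
  have ha0 : a = 0 := by nlinarith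
  exact ⟨ha0, mul_eq_zero.1 (by linarith)⟩

section Classes

variable {n : ℕ} {Γ : Fin n → Fin n → Prop}

theorem Communicate.refl (Γ : Fin n → Fin n → Prop) (a : Fin n) : Communicate Γ a a :=
  ⟨.refl, .refl⟩

theorem Communicate.trans {a b c : Fin n} (h₁ : Communicate Γ a b) (h₂ : Communicate Γ b c) :
    Communicate Γ a c :=
  ⟨h₁.1.trans h₂.1, h₂.2.trans h₁.2⟩

namespace IsClass

variable {C K : Finset (Fin n)}

theorem nonempty (hC : IsClass Γ C) : C.Nonempty :=
  let ⟨v, hv⟩ := hC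
  ⟨v, (hv v).2 (.refl Γ v)⟩

theorem access (hC : IsClass Γ C) {a b : Fin n} (ha : a ∈ C) (hb : b ∈ C) : Access Γ a b :=
  let ⟨_, hv⟩ := hC
  ((hv a).1 ha).2.trans ((hv b).1 hb).1

theorem mem_of_communicate (hC : IsClass Γ C) {a b : Fin n} (ha : a ∈ C)
    (hab : Communicate Γ a b) : b ∈ C :=
  let ⟨_, hv⟩ := hC
  (hv b).2 (((hv a).1 ha).trans hab)

theorem eq_of_mem (hC : IsClass Γ C) (hK : IsClass Γ K) {w : Fin n} (hwC : w ∈ C)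
    (hwK : w ∈ K) : C = K := by
  ext z
  exact ⟨fun hz => hK.mem_of_communicate hwK ⟨hC.access hwC hz, hC.access hz hwC⟩,
    fun hz => hC.mem_of_communicate hwC ⟨hK.access hwK hz, hK.access hz hwK⟩⟩

end IsClass

theorem exists_mem_forall_access_imp_access {S : Finset (Fin n)} (hS : S.Nonempty) :
    ∃ j ∈ S, ∀ k ∈ S, Access Γ j k → Access Γ k j := by
  classical
  let reach : Fin n → Finset (Fin n) := fun j => S.filter (Access Γ j)
  obtain ⟨j, hjS, hmin⟩ := S.exists_min_image (fun j => (reach j).card) hS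
  refine ⟨j, hjS, fun k hkS hjk => ?_⟩
  by_contra hkj
  have hlt : reach k ⊂ reach j := by
    refine Finset.ssubset_iff_of_subset (fun l hl => ?_) |>.2 ⟨j, ?_, ?_⟩
    · simp only [reach, Finset.mem_filter] at hl ⊢
      exact ⟨hl.1, hjk.trans hl.2⟩
    · simpa [reach] using ⟨hjS, Relation.ReflTransGen.refl⟩
    · simpa [reach] using fun _ => hkj
  exact (Finset.card_lt_card hlt).not_ge (hmin k hkS)

end Classes

def IsDistinguishedSingularClass {n : ℕ} (Γ : Fin n → Fin n → Prop)
    (M : Matrix (Fin n) (Fin n) ℝ) (C : Finset (Fin n)) : Prop :=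
  IsClass Γ C ∧ ¬ IsUnit (subm M C).det ∧
    ∀ K : Finset (Fin n), IsClass Γ K → K ≠ C →
      (∃ k ∈ K, ∃ v ∈ C, Access Γ k v) → IsUnit (subm M K).det

theorem det_subm_eq_zero_of_mulVec_eq_zero {n : ℕ} {M : Matrix (Fin n) (Fin n) ℝ}
    {y : Fin n → ℝ} (hMy : M *ᵥ y = 0) {C : Finset (Fin n)}
    (hC : ∀ i ∈ C, ∀ k ∉ C, M i k * y k = 0) (hyC : ∃ i ∈ C, y i ≠ 0) :
    (subm M C).det = 0 := by
  obtain ⟨i₀, hi₀, hyi₀⟩ := hyC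
  refine Matrix.exists_mulVec_eq_zero_iff.1 ⟨fun i => y i, fun h => hyi₀ (congrFun h ⟨i₀, hi₀⟩), ?_⟩
  ext ⟨i, hi⟩
  calc (subm M C *ᵥ fun i => y i) ⟨i, hi⟩ = ∑ l ∈ C, M i l * y l :=
        (Finset.sum_coe_sort C fun l => M i l * y l)
    _ = ∑ l, M i l * y l :=
        Finset.sum_subset (Finset.subset_univ C) fun l _ hl => hC i hi l hl
    _ = 0 := congrFun hMy i

section ZMatrix

variable {n : ℕ} {Γ : Fin n → Fin n → Prop} {M : Matrix (Fin n) (Fin n) ℝ}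
  {y : Fin n → ℝ}

theorem apply_eq_zero_of_nonneg_of_mulVec_eq_zero (hZ : ∀ j k, j ≠ k → M j k ≤ 0) (hy : 0 ≤ y)
    (hMy : M *ᵥ y = 0) {j k : Fin n} (hj : y j = 0) (hk : y k ≠ 0) : M j k = 0 := by
  have hterm : ∀ l ∈ Finset.univ, M j l * y l ≤ 0 := fun l _ => by
    rcases eq_or_ne j l with rfl | hjl
    · simp [hj]
    · exact mul_nonpos_of_nonpos_of_nonneg (hZ j l hjl) (hy l)
  have := (Finset.sum_eq_zero_iff_of_nonpos hterm).1 (congrFun hMy j) k (Finset.mem_univ k)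
  exact (mul_eq_zero.1 this).resolve_right hk

theorem ne_zero_of_access (hZ : ∀ j k, j ≠ k → M j k ≤ 0)
    (hΓM : ∀ j k, j ≠ k → Γ j k → M j k ≠ 0) (hy : 0 ≤ y) (hMy : M *ᵥ y = 0) {j k : Fin n}
    (hjk : Access Γ j k) (hk : y k ≠ 0) : y j ≠ 0 := by
  induction hjk using Relation.ReflTransGen.head_induction_on with
  | refl => exact hk
  | @head a c hac _ ih =>
    rcases eq_or_ne a c with rfl | hne
    · exact ih
    · exact fun ha => hΓM a c hne hac (apply_eq_zero_of_nonneg_of_mulVec_eq_zero hZ hy hMy ha ih)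

theorem exists_singular_class_subset_support (hZ : ∀ j k, j ≠ k → M j k ≤ 0)
    (hΓM : ∀ j k, j ≠ k → Γ j k → M j k ≠ 0) (hMΓ : ∀ j k, j ≠ k → M j k ≠ 0 → Γ j k)
    (hy : 0 ≤ y) (hMy : M *ᵥ y = 0) (hy0 : y ≠ 0) :
    ∃ C, IsClass Γ C ∧ (∀ w ∈ C, y w ≠ 0) ∧ ¬ IsUnit (subm M C).det := by
  classical
  obtain ⟨j, hj, hfinal⟩ := exists_mem_forall_access_imp_access (Γ := Γ)
    (S := Finset.univ.filter (y · ≠ 0)) (by simpa [Finset.Nonempty, funext_iff] using hy0)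
  simp only [Finset.mem_filter, Finset.mem_univ, true_and] at hj hfinal
  set C := Finset.univ.filter (Communicate Γ j)
  have hmem : ∀ w, w ∈ C ↔ Communicate Γ j w := by simp [C]
  refine ⟨C, ⟨j, hmem⟩, fun w hw => ne_zero_of_access hZ hΓM hy hMy ((hmem w).1 hw).2 hj,
    fun hunit => hunit.ne_zero ?_⟩
  refine det_subm_eq_zero_of_mulVec_eq_zero hMy (fun i hi k hk => ?_)
    ⟨j, (hmem j).2 (.refl Γ j), hj⟩
  rw [hmem] at hi hk
  by_contra hne
  obtain ⟨hMik, hyk⟩ := mul_ne_zero_iff.1 hne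
  have hik : i ≠ k := by rintro rfl; exact hk hi
  have hjk : Access Γ j k := hi.1.tail (hMΓ i k hik hMik)
  exact hk ⟨hjk, hfinal k hyk hjk⟩

/-- A singular class in the support of `y` that no other singular class in the support accesses
is distinguished, because every class accessing it lies in the support as well. -/
theorem exists_isDistinguishedSingularClass_subset_support (hZ : ∀ j k, j ≠ k → M j k ≤ 0)
    (hΓM : ∀ j k, j ≠ k → Γ j k → M j k ≠ 0) (hMΓ : ∀ j k, j ≠ k → M j k ≠ 0 → Γ j k)
    (hy : 0 ≤ y) (hMy : M *ᵥ y = 0) (hy0 : y ≠ 0) :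
    ∃ C, IsDistinguishedSingularClass Γ M C ∧ ∀ w ∈ C, y w ≠ 0 := by
  classical
  let Singular : Finset (Fin n) → Prop := fun C =>
    IsClass Γ C ∧ (∀ w ∈ C, y w ≠ 0) ∧ ¬ IsUnit (subm M C).det
  have hT : (Finset.univ.filter fun v => ∃ C, Singular C ∧ v ∈ C).Nonempty := by
    obtain ⟨C, hC⟩ := exists_singular_class_subset_support hZ hΓM hMΓ hy hMy hy0
    obtain ⟨v, hv⟩ := hC.1.nonempty
    exact ⟨v, by simpa using ⟨C, hC, hv⟩⟩
  obtain ⟨v, hv, hinitial⟩ := exists_mem_forall_access_imp_access (Γ := swap Γ) hT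
  simp only [Finset.mem_filter, Finset.mem_univ, true_and] at hv hinitial
  obtain ⟨C, ⟨hC, hCy, hCdet⟩, hvC⟩ := hv
  refine ⟨C, ⟨hC, hCdet, fun K hK hKC ⟨k, hkK, w, hwC, hkw⟩ => ?_⟩, hCy⟩
  by_contra hKdet
  have hKy : ∀ u ∈ K, y u ≠ 0 := fun u hu =>
    ne_zero_of_access hZ hΓM hy hMy ((hK.access hu hkK).trans hkw) (hCy w hwC)
  have hkv : Access Γ k v := hkw.trans (hC.access hwC hvC)
  have hvk : Access Γ v k := Relation.reflTransGen_swap.1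
    (hinitial k ⟨K, ⟨hK, hKy, hKdet⟩, hkK⟩ (Relation.reflTransGen_swap.2 hkv))
  exact hKC (hK.eq_of_mem hC hkK (hC.mem_of_communicate hvC ⟨hvk, hkv⟩))

end ZMatrix

theorem exists_nonneg_sub_smul_support_ssubset {ι : Type*} [Finite ι] {x y : ι → ℝ}
    (hx : 0 ≤ x) (hy : 0 ≤ y) (hxy : support x ⊆ support y) (hx0 : x ≠ 0) :
    ∃ t : ℝ, 0 ≤ t ∧ 0 ≤ y - t • x ∧ support (y - t • x) ⊂ support y := by
  obtain ⟨j, hj, hmin⟩ := (support x).exists_min_image (fun j => y j / x j) (Set.toFinite _)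
    (support_nonempty_iff.2 hx0)
  have hxj : 0 < x j := (hx j).lt_of_ne' hj
  refine ⟨y j / x j, div_nonneg (hy j) hxj.le, fun k => ?_, ?_⟩
  · rcases eq_or_ne (x k) 0 with hk | hk
    · simpa [hk] using hy k
    · have := (le_div_iff₀ ((hx k).lt_of_ne' hk)).1 (hmin k hk)
      simp only [Pi.sub_apply, Pi.smul_apply, smul_eq_mul, Pi.zero_apply]
      linarith
  · have hsub : support (y - (y j / x j) • x) ⊆ support y := fun k hk => by
      by_contra hyk
      have hxk : x k = 0 := notMem_support.1 fun h => hyk (hxy h)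
      simp [notMem_support.1 hyk, hxk] at hk
    refine (Set.ssubset_iff_of_subset hsub).2 ⟨j, hxy hj, ?_⟩
    simp [hxj.ne']

section Cone

variable {n p : ℕ} {Γ : Fin n → Fin n → Prop} {M : Matrix (Fin n) (Fin n) ℝ}

theorem mem_hull_of_nonneg_of_mulVec_eq_zero (hZ : ∀ j k, j ≠ k → M j k ≤ 0)
    (hΓM : ∀ j k, j ≠ k → Γ j k → M j k ≠ 0) (hMΓ : ∀ j k, j ≠ k → M j k ≠ 0 → Γ j k)
    {J : Fin p → Finset (Fin n)}
    (hJ : ∀ C, IsDistinguishedSingularClass Γ M C → ∃ i, J i = C) {x : Fin p → Fin n → ℝ}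
    (hx : ∀ i, 0 ≤ x i) (hMx : ∀ i, M *ᵥ x i = 0)
    (hxJ : ∀ i j, 0 < x i j ↔ ∃ v ∈ J i, Access Γ j v) {y : Fin n → ℝ} (hy : 0 ≤ y)
    (hMy : M *ᵥ y = 0) : y ∈ PointedCone.hull ℝ (Set.range x) := by
  induction h : (support y).ncard using Nat.strong_induction_on generalizing y with
  | _ N ih =>
  rcases eq_or_ne y 0 with rfl | hy0
  · exact zero_mem _
  obtain ⟨_, hC, hCy⟩ := exists_isDistinguishedSingularClass_subset_support hZ hΓM hMΓ hy hMy hy0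
  obtain ⟨i, rfl⟩ := hJ _ hC
  have hxy : support (x i) ⊆ support y := fun j hj => by
    obtain ⟨v, hv, hjv⟩ := (hxJ i j).1 ((hx i j).lt_of_ne' hj)
    exact ne_zero_of_access hZ hΓM hy hMy hjv (hCy v hv)
  have hx0 : x i ≠ 0 := by
    obtain ⟨v, hv⟩ := hC.1.nonempty
    exact fun h => by simpa [h] using (hxJ i v).2 ⟨v, hv, .refl⟩
  obtain ⟨t, ht, hyt, hsupp⟩ := exists_nonneg_sub_smul_support_ssubset (hx i) hy hxy hx0
  have hrest : y - t • x i ∈ PointedCone.hull ℝ (Set.range x) :=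
    ih _ (h ▸ Set.ncard_lt_ncard hsupp) hyt
      (by simp [Matrix.mulVec_sub, Matrix.mulVec_smul, hMy, hMx]) rfl
  simpa using add_mem hrest (PointedCone.smul_mem _ ht (PointedCone.subset_hull ⟨i, rfl⟩))

end Cone

theorem stmt_13_general {n : ℕ} (A B : Matrix (Fin n) (Fin n) ℝ)
    (hc1 : ∀ i j, 0 ≤ A i j)
    (hc2 : ∀ i j, i ≠ j → B i j ≤ A i j)
    (μ ρAB : ℝ) (hμ : μ = specRad ((B - A)⁻¹ * A)) (hρ : ρAB = μ / (1 + μ))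
    (Γ : Fin n → Fin n → Prop)
    (hΓ : Γ = if ρAB ≠ 0 then (fun j k => A j k ≠ 0 ∨ B j k ≠ 0)
              else (fun j k => A j k ≠ 0))
    (p : ℕ) (J : Fin p → Finset (Fin n))
    (hJenum : ∀ C : Finset (Fin n),
      (IsClass Γ C ∧ ¬ IsUnit (subm (ρAB • B - A) C).det ∧
        ∀ K : Finset (Fin n), IsClass Γ K → K ≠ C →
          (∃ k ∈ K, ∃ v ∈ C, Access Γ k v) →
          IsUnit (subm (ρAB • B - A) K).det) ↔ (∃ i : Fin p, J i = C))
    (x : Fin p → Fin n → ℝ)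
    (hx : ∀ i : Fin p, (∀ j, 0 ≤ x i j) ∧ (ρAB • B - A).mulVec (x i) = 0 ∧
      ∀ j, (0 < x i j ↔ ∃ v ∈ J i, Access Γ j v)) :
    ∀ y : Fin n → ℝ, (∀ j, 0 ≤ y j) → (ρAB • B - A).mulVec y = 0 →
      ∃ c : Fin p → ℝ, (∀ i, 0 ≤ c i) ∧ y = ∑ i : Fin p, c i • x i := by
  have hμ0 : 0 ≤ μ := hμ ▸ Real.sSup_nonneg (by rintro _ ⟨z, -, rfl⟩; exact norm_nonneg z)
  have hρ0 : 0 ≤ ρAB := hρ ▸ div_nonneg hμ0 (by linarith)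
  have hρ1 : ρAB < 1 := hρ ▸ (div_lt_one (by linarith)).2 (by linarith)
  have hentry : ∀ j k, (ρAB • B - A) j k = ρAB * B j k - A j k := fun _ _ => rfl
  have hZ : ∀ j k, j ≠ k → (ρAB • B - A) j k ≤ 0 := fun j k hjk =>
    hentry j k ▸ mul_sub_nonpos (hc1 j k) (hc2 j k hjk) hρ0 hρ1.le
  have hpattern : ∀ j k, j ≠ k → ((ρAB • B - A) j k ≠ 0 ↔ Γ j k) := fun j k hjk => by
    rw [hentry, ne_eq, mul_sub_eq_zero_iff (hc1 j k) (hc2 j k hjk) hρ0 hρ1, hΓ]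
    split_ifs with h <;> simp [h, Decidable.imp_iff_not_or]
  intro y hy hMy
  obtain ⟨c, rfl⟩ := (Submodule.mem_span_range_iff_exists_fun _).1 <|
    mem_hull_of_nonneg_of_mulVec_eq_zero hZ (fun j k hjk => (hpattern j k hjk).2)
      (fun j k hjk => (hpattern j k hjk).1) (fun C hC => (hJenum C).1 hC) (fun i => (hx i).1)
      (fun i => (hx i).2.1) (fun i => (hx i).2.2) hy hMy
  exact ⟨fun i => c i, fun i => (c i).2, rfl⟩

/-- If `J 1, …, J p` enumerate exactly the distinguished singular classes of
`Γ` with respect to `ρ(A,B)B − A`, and for each `i` the vector `x i` is a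
nonnegative null vector of `ρ(A,B)B − A` whose support consists of the vertices
having access in `Γ` to `J i`, then every nonnegative null vector of
`ρ(A,B)B − A` is a nonnegative linear combination of the `x i`. -/
theorem stmt_13 {n : ℕ} (A B : Matrix (Fin n) (Fin n) ℝ)
    (hc1 : ∀ i j, 0 ≤ A i j)
    (hc2 : ∀ i j, i ≠ j → B i j ≤ A i j)
    (hc3 : ∃ u : Fin n → ℝ, (∀ i, 0 < u i) ∧ ∀ i, 0 < (B - A).mulVec u i)
    (μ ρAB : ℝ) (hμ : μ = specRad ((B - A)⁻¹ * A)) (hρ : ρAB = μ / (1 + μ))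
    (Γ : Fin n → Fin n → Prop)
    (hΓ : Γ = if ρAB ≠ 0 then (fun j k => A j k ≠ 0 ∨ B j k ≠ 0)
              else (fun j k => A j k ≠ 0))
    (p : ℕ) (J : Fin p → Finset (Fin n)) (hJinj : Function.Injective J)
    (hJenum : ∀ C : Finset (Fin n),
      (IsClass Γ C ∧ ¬ IsUnit (subm (ρAB • B - A) C).det ∧
        ∀ K : Finset (Fin n), IsClass Γ K → K ≠ C →
          (∃ k ∈ K, ∃ v ∈ C, Access Γ k v) →
          IsUnit (subm (ρAB • B - A) K).det) ↔ (∃ i : Fin p, J i = C))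
    (x : Fin p → Fin n → ℝ)
    (hx : ∀ i : Fin p, (∀ j, 0 ≤ x i j) ∧ (ρAB • B - A).mulVec (x i) = 0 ∧
      ∀ j, (0 < x i j ↔ ∃ v ∈ J i, Access Γ j v)) :
    ∀ y : Fin n → ℝ, (∀ j, 0 ≤ y j) → (ρAB • B - A).mulVec y = 0 →
      ∃ c : Fin p → ℝ, (∀ i, 0 ≤ c i) ∧ y = ∑ i : Fin p, c i • x i :=
  stmt_13_general A B hc1 hc2 μ ρAB hμ hρ Γ hΓ p J hJenum x hx
end
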